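/- arXiv:1606.04276 — 4 statements merged into one kernel-verified Lean document; each statement's English description precedes it below -/
import Mathlib

section
/- Suppose d ≥ 3 and Assumption [A1] holds. Then there exists a positive constant C such that for all z ∈ ℝ^d, E[1/‖X − z‖] ≤ C. -/
open MeasureTheory ProbabilityTheory Filter
open scoped ENNReal NNReal RealInnerProductSpace Topology

noncomputable section

/-- The sample space `ℝ^d`. -/
abbrev Vec (d : ℕ) := EuclideanSpace ℝ (Fin d)

/-- The parameter space `ℝ^d × ℝ`, equipped with the euclidean (`L²`) norm. -/
abbrev Par (d : ℕ) := WithLp 2 (EuclideanSpace ℝ (Fin d) × ℝ)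

/-- Build an element of the parameter space from a center and a radius. -/
def pmk {d : ℕ} (z : Vec d) (a : ℝ) : Par d :=
  (WithLp.equiv 2 (EuclideanSpace ℝ (Fin d) × ℝ)).symm (z, a)

/-- First (center) component of a parameter. -/
def pz {d : ℕ} (y : Par d) : Vec d := (WithLp.equiv 2 (EuclideanSpace ℝ (Fin d) × ℝ) y).1

/-- Second (radius) component of a parameter. -/
def pa {d : ℕ} (y : Par d) : ℝ := (WithLp.equiv 2 (EuclideanSpace ℝ (Fin d) × ℝ) y).2

/-- `Hgrad x y` is the gradient in `y = (z, a)` of `g(x,y) = (‖x - z‖ - a)²/2`, i.e.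
`(z - x - a (z-x)/‖z-x‖, a - ‖z-x‖)`. -/
def Hgrad {d : ℕ} (x : Vec d) (y : Par d) : Par d :=
  pmk (pz y - x - pa y • (‖pz y - x‖⁻¹ • (pz y - x))) (pa y - ‖pz y - x‖)

/-- `Phi P X y = E[Hgrad (X) y]`, the gradient of `G(y) = E[(‖X-z‖-a)²]/2`. -/
def Phi {Ω : Type*} [MeasurableSpace Ω] {d : ℕ} (P : Measure Ω) (X : Ω → Vec d)
    (y : Par d) : Par d :=
  ∫ ω, Hgrad (X ω) y ∂P

/-- Quadratic form `v ↦ vᵀ Γ(z) v` of the matrix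
`Γ(z) = E[(1/‖X-z‖)(I_d - (X-z)(X-z)ᵀ/‖X-z‖²)]`. -/
def GammaQF {Ω : Type*} [MeasurableSpace Ω] {d : ℕ} (P : Measure Ω) (X : Ω → Vec d)
    (z v : Vec d) : ℝ :=
  ∫ ω, ‖X ω - z‖⁻¹ * (‖v‖ ^ 2 - ⟪X ω - z, v⟫ ^ 2 / ‖X ω - z‖ ^ 2) ∂P

/-- The Hessian matrix `Γ_y` of `G` at `y = (z, a)`, applied to a vector `y' = (z', a')`:
`Γ_y = [[I_d - a E[(1/‖X-z‖)(I_d - (X-z)(X-z)ᵀ/‖X-z‖²)], E[(X-z)/‖X-z‖]], [E[(X-z)/‖X-z‖]ᵀ, 1]]`. -/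
def GammaAt {Ω : Type*} [MeasurableSpace Ω] {d : ℕ} (P : Measure Ω) (X : Ω → Vec d)
    (y y' : Par d) : Par d :=
  pmk (pz y' - pa y • (∫ ω, ‖X ω - pz y‖⁻¹ •
          (pz y' - (⟪X ω - pz y, pz y'⟫ / ‖X ω - pz y‖ ^ 2) • (X ω - pz y)) ∂P)
        + pa y' • ∫ ω, ‖X ω - pz y‖⁻¹ • (X ω - pz y) ∂P)
      (⟪∫ ω, ‖X ω - pz y‖⁻¹ • (X ω - pz y) ∂P, pz y'⟫ + pa y')

/-
Write `X - z = rW • (U - x)` with `x = (rW)⁻¹ • (z - μ)`. The law `ν` of `U` has a bounded density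
with respect to the `(d-1)`-dimensional Hausdorff measure on the unit sphere, and a spherical cap
of radius `t` is the image of a flat `(d-1)`-disc of radius `4t` under the `2`-Lipschitz radial
projection, so `ν (closedBall x t) ≤ K t ^ (d-1) ≤ K t ^ 2` for small `t` because `d ≥ 3`. The
layer-cake formula turns this into `∫ ‖u - x‖⁻¹ dν(u) ≤ 2 √K` uniformly in `x`, and independence
of `W` and `U` gives `E ‖X - z‖⁻¹ ≤ 2 √K E (rW)⁻¹ = 2 √K E ‖X - μ‖⁻¹`, which is finite by [A1]
since `y ≤ 1 + y²`.
-/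

section

open Metric Set Module

lemma lipschitzOnWith_inv_norm_smul {E : Type*} [NormedAddCommGroup E] [NormedSpace ℝ E] :
    LipschitzOnWith 2 (fun x : E => ‖x‖⁻¹ • x) {x | 1 ≤ ‖x‖} := by
  refine LipschitzOnWith.of_dist_le_mul fun x (hx : 1 ≤ ‖x‖) y (hy : 1 ≤ ‖y‖) => ?_
  have hx0 : 0 < ‖x‖ := one_pos.trans_le hx
  have hy0 : 0 < ‖y‖ := one_pos.trans_le hy
  have hsplit : ‖x‖⁻¹ • x - ‖y‖⁻¹ • y =
      ‖x‖⁻¹ • ((x - y) + (‖y‖ - ‖x‖) • (‖y‖⁻¹ • y)) := by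
    have hcoef : ‖x‖⁻¹ * (‖y‖ - ‖x‖) * ‖y‖⁻¹ = ‖x‖⁻¹ - ‖y‖⁻¹ := by field_simp
    rw [smul_add, smul_smul, smul_smul, hcoef]
    module
  have hnorm_y : ‖‖y‖⁻¹ • y‖ = 1 := by
    rw [norm_smul, norm_inv, norm_norm, inv_mul_cancel₀ hy0.ne']
  calc dist (‖x‖⁻¹ • x) (‖y‖⁻¹ • y)
      = ‖x‖⁻¹ * ‖(x - y) + (‖y‖ - ‖x‖) • (‖y‖⁻¹ • y)‖ := by
        rw [dist_eq_norm, hsplit, norm_smul, norm_inv, norm_norm]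
    _ ≤ 1 * (‖x - y‖ + ‖x - y‖) := by
        gcongr
        · exact inv_le_one_of_one_le₀ hx
        · refine (norm_add_le _ _).trans (add_le_add_right ?_ _)
          rw [norm_smul, hnorm_y, mul_one, Real.norm_eq_abs]
          exact (abs_norm_sub_norm_le y x).trans_eq (norm_sub_rev y x)
    _ = 2 * dist x y := by rw [dist_eq_norm]; ring

lemma sphere_inter_closedBall_subset_image {E : Type*} [NormedAddCommGroup E]
    [InnerProductSpace ℝ E] {p : E} (hp : ‖p‖ = 1) {s : ℝ} (hs : s ≤ 1) :
    sphere (0 : E) 1 ∩ closedBall p s ⊆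
      (fun v => ‖p + v‖⁻¹ • (p + v)) '' ((ℝ ∙ p)ᗮ ∩ closedBall 0 (2 * s)) := by
  rintro u ⟨hu, hup⟩
  rw [mem_sphere_zero_iff_norm] at hu
  rw [mem_closedBall, dist_eq_norm] at hup
  set a : ℝ := ⟪p, u⟫
  have hs0 : 0 ≤ s := (norm_nonneg _).trans hup
  have hdist : ‖u - p‖ ^ 2 = 2 - 2 * a := by
    rw [norm_sub_sq_real, hu, hp, real_inner_comm]; ring
  have ha_le : a ≤ 1 := by simpa [hu, hp] using real_inner_le_norm p u
  have ha_ge : 2 - 2 * a ≤ s ^ 2 := hdist ▸ pow_le_pow_left₀ (norm_nonneg _) hup 2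
  have ha : 1 / 2 ≤ a := by nlinarith
  have ha0 : 0 < a := by linarith
  have hv_norm : ‖a⁻¹ • u - p‖ ^ 2 ≤ (2 * s) ^ 2 := by
    have hsq : ‖a⁻¹ • u - p‖ ^ 2 = (1 - a ^ 2) / a ^ 2 := by
      rw [norm_sub_sq_real, norm_smul, real_inner_smul_left, real_inner_comm, hu, hp,
        Real.norm_eq_abs, abs_of_pos (inv_pos.2 ha0)]
      field_simp
      ring
    have h1 : 1 - a ^ 2 ≤ s ^ 2 := by nlinarith
    have h2 : s ^ 2 ≤ (2 * s) ^ 2 * a ^ 2 := by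
      nlinarith [mul_nonneg (sq_nonneg s) (by nlinarith : (0 : ℝ) ≤ 4 * a ^ 2 - 1)]
    rw [hsq, div_le_iff₀ (by positivity)]
    linarith
  refine ⟨a⁻¹ • u - p, ⟨?_, ?_⟩, ?_⟩
  · rw [SetLike.mem_coe, Submodule.mem_orthogonal_singleton_iff_inner_right, inner_sub_right,
      real_inner_smul_right, real_inner_self_eq_norm_sq, hp, inv_mul_cancel₀ ha0.ne']
    norm_num
  · rw [mem_closedBall, dist_zero_right]
    exact (pow_le_pow_iff_left₀ (norm_nonneg _) (by positivity) two_ne_zero).1 hv_norm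
  · simp only [add_sub_cancel, norm_smul, norm_inv, Real.norm_eq_abs, abs_of_pos ha0, hu,
      mul_one, inv_inv, smul_smul, mul_inv_cancel₀ ha0.ne', one_smul]

instance isAddHaarMeasure_hausdorffMeasure_euclideanSpace (n : ℕ) :
    (μH[n] : Measure (EuclideanSpace ℝ (Fin n))).IsAddHaarMeasure := by
  simpa using isAddHaarMeasure_hausdorffMeasure (E := EuclideanSpace ℝ (Fin n))

section Cap

variable {E : Type*} [NormedAddCommGroup E] [InnerProductSpace ℝ E] [MeasurableSpace E]
  [BorelSpace E]

lemma hausdorffMeasure_orthogonal_inter_closedBall {n : ℕ} (hE : finrank ℝ E = n + 1) {p : E}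
    (hp : p ≠ 0) {R : ℝ} (hR : 0 ≤ R) :
    μH[n] ((((ℝ ∙ p)ᗮ : Submodule ℝ E) : Set E) ∩ closedBall 0 R) =
      ENNReal.ofReal (R ^ n) * μH[n] (closedBall (0 : EuclideanSpace ℝ (Fin n)) 1) := by
  have : Fact (finrank ℝ E = n + 1) := ⟨hE⟩
  let L : EuclideanSpace ℝ (Fin n) →ₗᵢ[ℝ] E :=
    (ℝ ∙ p)ᗮ.subtypeₗᵢ.comp
      (OrthonormalBasis.fromOrthogonalSpanSingleton n hp).repr.symm.toLinearIsometry
  have himage : L '' closedBall 0 R = ((ℝ ∙ p)ᗮ : Set E) ∩ closedBall 0 R := by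
    ext x
    constructor
    · rintro ⟨w, hw, rfl⟩
      exact ⟨Submodule.coe_mem _, by simpa using hw⟩
    · rintro ⟨hx, hxR⟩
      refine ⟨(OrthonormalBasis.fromOrthogonalSpanSingleton n hp).repr ⟨x, hx⟩, ?_, ?_⟩
      · simpa using hxR
      · simp [L]
  rw [← himage, L.isometry.hausdorffMeasure_image (Or.inl n.cast_nonneg),
    Measure.addHaar_closedBall' _ _ hR, finrank_euclideanSpace_fin]

lemma hausdorffMeasure_sphere_inter_closedBall_le {n : ℕ} (hE : finrank ℝ E = n + 1) (x : E)
    {t : ℝ} (ht0 : 0 ≤ t) (ht : t ≤ 1 / 2) :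
    μH[n] (sphere (0 : E) 1 ∩ closedBall x t) ≤
      ENNReal.ofReal ((8 * t) ^ n) * μH[n] (closedBall (0 : EuclideanSpace ℝ (Fin n)) 1) := by
  rcases (sphere (0 : E) 1 ∩ closedBall x t).eq_empty_or_nonempty with hempty | ⟨p, hp, hpx⟩
  · simp [hempty]
  rw [mem_sphere_zero_iff_norm] at hp
  set V : Set E := (((ℝ ∙ p)ᗮ : Submodule ℝ E) : Set E)
  have hcap : sphere (0 : E) 1 ∩ closedBall x t ⊆ sphere 0 1 ∩ closedBall p (2 * t) :=
    fun u ⟨hu, hux⟩ => ⟨hu, mem_closedBall.2 <| (dist_triangle u x p).trans <| by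
      linarith [mem_closedBall.1 hux, mem_closedBall'.1 hpx]⟩
  have hlip :
      LipschitzOnWith 2 (fun v => ‖p + v‖⁻¹ • (p + v)) (V ∩ closedBall 0 (2 * (2 * t))) := by
    have hnorm : ∀ v ∈ V ∩ closedBall 0 (2 * (2 * t)), 1 ≤ ‖p + v‖ := by
      rintro v ⟨hv, -⟩
      have hpv : ⟪p, v⟫ = 0 := Submodule.mem_orthogonal_singleton_iff_inner_right.1 hv
      have : ‖p + v‖ ^ 2 = 1 + ‖v‖ ^ 2 := by rw [norm_add_sq_real, hpv, hp]; ring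
      nlinarith [norm_nonneg (p + v), sq_nonneg ‖v‖]
    refine LipschitzOnWith.of_dist_le_mul fun v hv w hw => ?_
    simpa using lipschitzOnWith_inv_norm_smul.dist_le_mul (p + v) (hnorm v hv) (p + w) (hnorm w hw)
  calc μH[n] (sphere (0 : E) 1 ∩ closedBall x t)
      ≤ μH[n] ((fun v => ‖p + v‖⁻¹ • (p + v)) '' (V ∩ closedBall 0 (2 * (2 * t)))) :=
        measure_mono (hcap.trans (sphere_inter_closedBall_subset_image hp (by linarith)))
    _ ≤ 2 ^ (n : ℝ) * μH[n] (V ∩ closedBall 0 (2 * (2 * t))) := by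
        simpa using hlip.hausdorffMeasure_image_le n.cast_nonneg
    _ = ENNReal.ofReal ((8 * t) ^ n) * μH[n] (closedBall (0 : EuclideanSpace ℝ (Fin n)) 1) := by
        rw [hausdorffMeasure_orthogonal_inter_closedBall hE
          (ne_zero_of_norm_ne_zero (hp ▸ one_ne_zero)) (by positivity), ← mul_assoc,
          ENNReal.rpow_natCast]
        congr 1
        rw [← ENNReal.ofReal_ofNat, ← ENNReal.ofReal_pow zero_le_two,
          ← ENNReal.ofReal_mul (by positivity), ← mul_pow]
        ring_nf

lemma exists_measure_closedBall_le_mul_sq {n : ℕ} (hE : finrank ℝ E = n + 1) (hn : 2 ≤ n)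
    {S : Set E} (hS : S ⊆ sphere 0 1) {ν : Measure E} [IsProbabilityMeasure ν] {c : ℝ≥0∞}
    (hc : c ≠ ⊤) (hν : ν = c • (μH[n] : Measure E).restrict S) :
    ∃ K : ℝ, 0 < K ∧
      ∀ (x : E) (t : ℝ), 0 < t → ν (closedBall x t) ≤ ENNReal.ofReal (K * t ^ 2) := by
  set B := μH[n] (closedBall (0 : EuclideanSpace ℝ (Fin n)) 1)
  have hB : B ≠ ⊤ := measure_closedBall_lt_top.ne
  refine ⟨c.toReal * 8 ^ n * B.toReal + 4, by positivity, fun x t ht => ?_⟩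
  rcases le_or_gt t (1 / 2) with ht_small | ht_large
  · have hpow : (8 * t) ^ n ≤ 8 ^ n * t ^ 2 := by
      rw [mul_pow]
      exact mul_le_mul_of_nonneg_left (pow_le_pow_of_le_one ht.le (by linarith) hn) (by positivity)
    calc ν (closedBall x t) = c * μH[n] (closedBall x t ∩ S) := by
          rw [hν, Measure.smul_apply, Measure.restrict_apply measurableSet_closedBall, smul_eq_mul]
      _ ≤ c * (ENNReal.ofReal ((8 * t) ^ n) * B) := by
          gcongr
          refine (measure_mono (inter_subset_inter_right _ hS)).trans ?_
          rw [inter_comm]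
          exact hausdorffMeasure_sphere_inter_closedBall_le hE x ht.le ht_small
      _ = ENNReal.ofReal (c.toReal * ((8 * t) ^ n * B.toReal)) := by
          rw [ENNReal.ofReal_mul ENNReal.toReal_nonneg, ENNReal.ofReal_mul (by positivity),
            ENNReal.ofReal_toReal hc, ENNReal.ofReal_toReal hB]
      _ ≤ ENNReal.ofReal ((c.toReal * 8 ^ n * B.toReal + 4) * t ^ 2) := by
          refine ENNReal.ofReal_le_ofReal ?_
          calc c.toReal * ((8 * t) ^ n * B.toReal) ≤ c.toReal * (8 ^ n * t ^ 2 * B.toReal) := by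
                gcongr
            _ ≤ (c.toReal * 8 ^ n * B.toReal + 4) * t ^ 2 := by nlinarith [sq_nonneg t]
  · calc ν (closedBall x t) ≤ 1 := prob_le_one
      _ ≤ ENNReal.ofReal ((c.toReal * 8 ^ n * B.toReal + 4) * t ^ 2) := by
          rw [← ENNReal.ofReal_one]
          refine ENNReal.ofReal_le_ofReal ?_
          have : 0 ≤ c.toReal * 8 ^ n * B.toReal * t ^ 2 := by positivity
          nlinarith

end Cap

lemma lintegral_Ioi_ofReal_mul_rpow_neg_two {K : ℝ} (hK : 0 ≤ K) {T : ℝ} (hT : 0 < T) :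
    ∫⁻ t in Ioi T, ENNReal.ofReal (K * t ^ (-2 : ℝ)) = ENNReal.ofReal (K / T) := by
  rw [← ofReal_integral_eq_lintegral_ofReal
    ((integrableOn_Ioi_rpow_of_lt (by norm_num) hT).const_mul K)
    ((ae_restrict_iff' measurableSet_Ioi).2 (Eventually.of_forall fun t (ht : T < t) =>
      mul_nonneg hK (Real.rpow_nonneg (hT.trans ht).le _))),
    integral_const_mul, integral_Ioi_rpow_of_lt (by norm_num) hT]
  norm_num [Real.rpow_neg_one, div_eq_mul_inv]

lemma lintegral_inv_dist_le {α : Type*} [PseudoMetricSpace α] [MeasurableSpace α]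
    [OpensMeasurableSpace α] (ν : Measure α) [IsProbabilityMeasure ν] (x : α) {K : ℝ}
    (hK : 0 < K) (hball : ∀ t, 0 < t → ν (closedBall x t) ≤ ENNReal.ofReal (K * t ^ 2)) :
    ∫⁻ u, ENNReal.ofReal (dist u x)⁻¹ ∂ν ≤ ENNReal.ofReal (2 * √K) := by
  have hmeas : Measurable fun u => (dist u x)⁻¹ :=
    (continuous_id.dist continuous_const).measurable.inv
  have hT : 0 < √K := Real.sqrt_pos.2 hK
  have hlevel : ∀ t, 0 < t → ν {u | t < (dist u x)⁻¹} ≤ ENNReal.ofReal (K * t ^ (-2 : ℝ)) := by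
    intro t ht
    have hsub : {u | t < (dist u x)⁻¹} ⊆ closedBall x t⁻¹ := fun u (hu : t < (dist u x)⁻¹) =>
      ((lt_inv_comm₀ ht (inv_pos.1 (ht.trans hu))).1 hu).le
    calc ν {u | t < (dist u x)⁻¹} ≤ ν (closedBall x t⁻¹) := measure_mono hsub
      _ ≤ ENNReal.ofReal (K * t⁻¹ ^ 2) := hball _ (inv_pos.2 ht)
      _ = ENNReal.ofReal (K * t ^ (-2 : ℝ)) := by
        rw [Real.rpow_neg ht.le, Real.rpow_two, inv_pow]
  rw [lintegral_eq_lintegral_meas_lt ν (Eventually.of_forall fun u => inv_nonneg.2 dist_nonneg)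
      hmeas.aemeasurable, ← Ioc_union_Ioi_eq_Ioi hT.le,
    lintegral_union measurableSet_Ioi Ioc_disjoint_Ioi_same]
  calc (∫⁻ t in Ioc 0 √K, ν {u | t < (dist u x)⁻¹}) + ∫⁻ t in Ioi √K, ν {u | t < (dist u x)⁻¹}
      ≤ (∫⁻ t in Ioc 0 √K, 1) + ∫⁻ t in Ioi √K, ENNReal.ofReal (K * t ^ (-2 : ℝ)) :=
        add_le_add (lintegral_mono fun _ => prob_le_one)
          (setLIntegral_mono (by fun_prop) fun t ht => hlevel t (hT.trans ht))
    _ = ENNReal.ofReal (2 * √K) := by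
        rw [lintegral_Ioi_ofReal_mul_rpow_neg_two hK.le hT, setLIntegral_one, Real.volume_Ioc,
          ← ENNReal.ofReal_add (by positivity) (by positivity), Real.div_sqrt]
        ring_nf

theorem ProbabilityTheory.IndepFun.lintegral_comp_eq_lintegral_lintegral {Ω β γ : Type*}
    [MeasurableSpace Ω] [MeasurableSpace β] [MeasurableSpace γ] {P : Measure Ω} [IsFiniteMeasure P]
    {Y : Ω → β} {Z : Ω → γ} (h : IndepFun Y Z P) (hY : Measurable Y) (hZ : Measurable Z)
    {f : β × γ → ℝ≥0∞} (hf : Measurable f) :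
    ∫⁻ ω, f (Y ω, Z ω) ∂P = ∫⁻ y, ∫⁻ z, f (y, z) ∂(P.map Z) ∂(P.map Y) := by
  rw [← lintegral_map hf (hY.prodMk hZ),
    h.map_prod_eq_prod_map_map hY.aemeasurable hZ.aemeasurable, lintegral_prod _ hf.aemeasurable]

lemma lintegral_inv_norm_add_smul_sub_le {E : Type*} [NormedAddCommGroup E] [NormedSpace ℝ E]
    [MeasurableSpace E] [BorelSpace E] [SecondCountableTopology E] {Ω : Type*}
    [MeasurableSpace Ω] {P : Measure Ω} [IsProbabilityMeasure P] {W : Ω → ℝ} {U : Ω → E}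
    (hW : Measurable W) (hU : Measurable U) (hWpos : ∀ ω, 0 < W ω) (hindep : IndepFun W U P)
    {K : ℝ} (hK : 0 < K)
    (hball : ∀ x t, 0 < t → P.map U (closedBall x t) ≤ ENNReal.ofReal (K * t ^ 2)) (μ z : E) :
    ∫⁻ ω, ENNReal.ofReal ‖μ + W ω • U ω - z‖⁻¹ ∂P ≤
      ENNReal.ofReal (2 * √K) * ∫⁻ ω, ENNReal.ofReal (W ω)⁻¹ ∂P := by
  have : IsProbabilityMeasure (P.map U) := Measure.isProbabilityMeasure_map hU.aemeasurable
  set g : ℝ × E → ℝ≥0∞ := fun q =>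
    ENNReal.ofReal q.1⁻¹ * ENNReal.ofReal (dist q.2 (q.1⁻¹ • (z - μ)))⁻¹
  have hg : Measurable g := by fun_prop
  have hrescale : ∀ ω, ENNReal.ofReal ‖μ + W ω • U ω - z‖⁻¹ = g (W ω, U ω) := by
    intro ω
    have hw := hWpos ω
    have : μ + W ω • U ω - z = W ω • (U ω - (W ω)⁻¹ • (z - μ)) := by
      rw [smul_sub, smul_inv_smul₀ hw.ne']; abel
    rw [this, norm_smul, Real.norm_of_nonneg hw.le, mul_inv,
      ENNReal.ofReal_mul (inv_nonneg.2 hw.le), ← dist_eq_norm]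
  calc ∫⁻ ω, ENNReal.ofReal ‖μ + W ω • U ω - z‖⁻¹ ∂P
      = ∫⁻ w, ENNReal.ofReal w⁻¹ * ∫⁻ u, ENNReal.ofReal (dist u (w⁻¹ • (z - μ)))⁻¹ ∂(P.map U)
          ∂(P.map W) := by
        simp_rw [hrescale, hindep.lintegral_comp_eq_lintegral_lintegral hW hU hg, g,
          lintegral_const_mul' _ _ ENNReal.ofReal_ne_top]
    _ ≤ ∫⁻ w, ENNReal.ofReal w⁻¹ * ENNReal.ofReal (2 * √K) ∂(P.map W) :=
        lintegral_mono fun w => by gcongr; exact lintegral_inv_dist_le _ _ hK (hball _)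
    _ = ENNReal.ofReal (2 * √K) * ∫⁻ ω, ENNReal.ofReal (W ω)⁻¹ ∂P := by
        rw [lintegral_mul_const _ (by fun_prop), lintegral_map (by fun_prop) hW, mul_comm]

lemma lintegral_ofReal_inv_lt_top_of_integrable_inv_sq {Ω : Type*} [MeasurableSpace Ω]
    {P : Measure Ω} [IsFiniteMeasure P] {g : Ω → ℝ} (hg : Integrable (fun ω => (g ω ^ 2)⁻¹) P) :
    ∫⁻ ω, ENNReal.ofReal (g ω)⁻¹ ∂P < ⊤ := by
  have hle : ∀ y : ℝ, y⁻¹ ≤ 1 + (y ^ 2)⁻¹ := fun y => by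
    rw [← inv_pow]; nlinarith [sq_nonneg (y⁻¹ - 1)]
  exact (lintegral_mono fun ω => ENNReal.ofReal_le_ofReal (hle (g ω))).trans_lt
    ((integrable_const 1).add hg).lintegral_lt_top

end

theorem statement9_general
    {Ω : Type*} [MeasurableSpace Ω] (P : Measure Ω) [IsProbabilityMeasure P]
    {d : ℕ} (hd : 3 ≤ d)
    (μ : Vec d) (r : ℝ) (hr : 0 < r)
    (W : Ω → ℝ) (U : Ω → Vec d)
    (hWm : Measurable W) (hUm : Measurable U)
    (hWpos : ∀ ω, 0 < W ω) (hUnorm : ∀ ω, ‖U ω‖ = 1)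
    (hindep : IndepFun W U P)
    (X : Ω → Vec d) (hX : ∀ ω, X ω = μ + (r * W ω) • U ω)
    (S : Set (Vec d)) (hSsub : S ⊆ Metric.sphere (0 : Vec d) 1)
    (hSpos : 0 < μH[(d : ℝ) - 1] S)
    (hlaw : Measure.map U P = (μH[(d : ℝ) - 1] S)⁻¹ • (μH[(d : ℝ) - 1] : Measure (Vec d)).restrict S)
    (hA1 : Integrable (fun ω => (‖X ω - μ‖ ^ 2)⁻¹) P)
    :
    ∃ C : ℝ, 0 < C ∧ ∀ z : Vec d,
      ∫⁻ ω, ENNReal.ofReal ‖X ω - z‖⁻¹ ∂P ≤ ENNReal.ofReal C := by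
  have hdim : Module.finrank ℝ (Vec d) = (d - 1) + 1 := by rw [finrank_euclideanSpace_fin]; omega
  have hcast : (d : ℝ) - 1 = ((d - 1 : ℕ) : ℝ) := by rw [Nat.cast_sub (by omega), Nat.cast_one]
  rw [hcast] at hlaw hSpos
  have : IsProbabilityMeasure (P.map U) := Measure.isProbabilityMeasure_map hUm.aemeasurable
  obtain ⟨K, hK, hball⟩ := exists_measure_closedBall_le_mul_sq hdim (by omega) hSsub
    (ENNReal.inv_ne_top.2 hSpos.ne') hlaw
  have hnorm : ∀ ω, ‖X ω - μ‖ = r * W ω := fun ω => by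
    rw [hX, add_sub_cancel_left, norm_smul, hUnorm, mul_one,
      Real.norm_of_nonneg (mul_pos hr (hWpos ω)).le]
  set I := ∫⁻ ω, ENNReal.ofReal ‖X ω - μ‖⁻¹ ∂P
  have hI : I ≠ ⊤ := (lintegral_ofReal_inv_lt_top_of_integrable_inv_sq hA1).ne
  refine ⟨(ENNReal.ofReal (2 * √K) * I).toReal + 1, by positivity, fun z => ?_⟩
  calc ∫⁻ ω, ENNReal.ofReal ‖X ω - z‖⁻¹ ∂P
      ≤ ENNReal.ofReal (2 * √K) * ∫⁻ ω, ENNReal.ofReal (r * W ω)⁻¹ ∂P := by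
        simp_rw [hX]
        exact lintegral_inv_norm_add_smul_sub_le (hWm.const_mul r) hUm
          (fun ω => mul_pos hr (hWpos ω)) (hindep.comp (measurable_const_mul r) measurable_id)
          hK hball μ z
    _ = ENNReal.ofReal (2 * √K) * I := by simp_rw [I, hnorm]
    _ ≤ ENNReal.ofReal ((ENNReal.ofReal (2 * √K) * I).toReal + 1) := by
        rw [← ENNReal.ofReal_toReal (ENNReal.mul_ne_top ENNReal.ofReal_ne_top hI)]
        exact ENNReal.ofReal_le_ofReal (by simp)

theorem statement9
    {Ω : Type*} [MeasurableSpace Ω] (P : Measure Ω) [IsProbabilityMeasure P]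
    {d : ℕ} (hd : 3 ≤ d)
    (μ : Vec d) (r : ℝ) (hr : 0 < r)
    (W : Ω → ℝ) (U : Ω → Vec d)
    (hWm : Measurable W) (hUm : Measurable U)
    (hWpos : ∀ ω, 0 < W ω) (hUnorm : ∀ ω, ‖U ω‖ = 1)
    (hindep : IndepFun W U P)
    (X : Ω → Vec d) (hX : ∀ ω, X ω = μ + (r * W ω) • U ω)
    (S : Set (Vec d)) (hSm : MeasurableSet S) (hSsub : S ⊆ Metric.sphere (0 : Vec d) 1)
    (hSpos : 0 < μH[(d : ℝ) - 1] S) (hSfin : μH[(d : ℝ) - 1] S < ⊤)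
    (hlaw : Measure.map U P = (μH[(d : ℝ) - 1] S)⁻¹ • (μH[(d : ℝ) - 1] : Measure (Vec d)).restrict S)
    (hA1 : Integrable (fun ω => (‖X ω - μ‖ ^ 2)⁻¹) P)
    :
    ∃ C : ℝ, 0 < C ∧ ∀ z : Vec d,
      ∫⁻ ω, ENNReal.ofReal ‖X ω - z‖⁻¹ ∂P ≤ ENNReal.ofReal C :=
  statement9_general P hd μ r hr W U hWm hUm hWpos hUnorm hindep X hX S hSsub hSpos hlaw hA1

end
end

section
/- Under Assumptions [A1], [A2] and [A3], for every compact convex subset K of ℝ^d × ℝ containing θ, there exists a positive constant C_θ such that for all y ∈ K, ‖Φ(y) − Γ_θ(y − θ)‖ ≤ C_θ·‖y − θ‖². -/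
/-!
At `θ = (μ, r*)` the gradient field vanishes: `H(X, θ) = ((r* - r W) U, r* - r W)`, whose mean is
zero because `W` and `U` are independent and `r* = r E[W]`. Hence `Φ(y) - Γ_θ(y - θ)` is the mean
of the first-order Taylor remainder of `y ↦ H(X, y)` at `θ`. With `b = μ - X`, this remainder is
controlled by the expansions of `v ↦ ‖v‖` and `v ↦ v / ‖v‖` around `b`, whose remainders are
`O(‖δ‖² / ‖b‖)` and `O(‖δ‖² / ‖b‖²)` uniformly in the increment `δ`. So the remainder is at most
`(3 |r*| ‖X - μ‖⁻² + 2 ‖X - μ‖⁻¹) ‖y - θ‖²`, which is integrable by [A1].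
-/

open MeasureTheory ProbabilityTheory Filter
open scoped ENNReal NNReal RealInnerProductSpace Topology

noncomputable section

section UnitVector

variable {F : Type*} [NormedAddCommGroup F] [InnerProductSpace ℝ F]

lemma abs_inner_div_norm_le (b δ : F) : |⟪b, δ⟫ / ‖b‖| ≤ ‖δ‖ := by
  rw [abs_div, abs_norm]
  exact div_le_of_le_mul₀ (norm_nonneg _) (norm_nonneg _)
    ((abs_real_inner_le_norm b δ).trans_eq (mul_comm _ _))

lemma norm_inv_norm_smul_le_one (v : F) : ‖‖v‖⁻¹ • v‖ ≤ 1 := by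
  rcases eq_or_ne v 0 with rfl | hv
  · simp
  · exact (norm_smul_inv_norm hv).le

lemma norm_smul_inv_norm_smul_self (v : F) : ‖v‖ • ‖v‖⁻¹ • v = v := by
  rcases eq_or_ne v 0 with rfl | hv
  · simp
  · rw [smul_inv_smul₀ (norm_ne_zero_iff.mpr hv)]

lemma norm_inv_norm_smul_sub_inv_norm_smul_le (a b : F) (hb : b ≠ 0) :
    ‖‖a‖⁻¹ • a - ‖b‖⁻¹ • b‖ ≤ 2 * ‖a - b‖ / ‖b‖ := by
  have hnb : 0 < ‖b‖ := norm_pos_iff.mpr hb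
  have hscal : |‖a‖⁻¹ - ‖b‖⁻¹| * ‖a‖ ≤ ‖a - b‖ / ‖b‖ := by
    rcases eq_or_ne a 0 with rfl | ha
    · simp only [norm_zero, mul_zero]; positivity
    have hna : 0 < ‖a‖ := norm_pos_iff.mpr ha
    rw [show |‖a‖⁻¹ - ‖b‖⁻¹| * ‖a‖ = |‖b‖ - ‖a‖| / ‖b‖ by
      rw [inv_sub_inv hna.ne' hnb.ne', abs_div, abs_of_pos (mul_pos hna hnb)]; field_simp]
    gcongr
    exact abs_norm_sub_norm_le b a |>.trans_eq (norm_sub_rev b a)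
  calc ‖‖a‖⁻¹ • a - ‖b‖⁻¹ • b‖ = ‖‖b‖⁻¹ • (a - b) + (‖a‖⁻¹ - ‖b‖⁻¹) • a‖ := by
        congr 1; module
    _ ≤ ‖a - b‖ / ‖b‖ + ‖a - b‖ / ‖b‖ := by
        refine (norm_add_le _ _).trans (add_le_add ?_ ?_)
        · rw [norm_smul, norm_inv, norm_norm, inv_mul_eq_div]
        · rwa [norm_smul, Real.norm_eq_abs]
    _ = 2 * ‖a - b‖ / ‖b‖ := by ring

lemma abs_norm_add_sub_norm_sub_inner_div_le (b δ : F) (hb : b ≠ 0) :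
    |‖b + δ‖ - ‖b‖ - ⟪b, δ⟫ / ‖b‖| ≤ ‖δ‖ ^ 2 / (2 * ‖b‖) := by
  set n := ‖b‖
  set m := ‖b + δ‖
  set q := ⟪b, δ⟫ / n
  have hn : 0 < n := norm_pos_iff.mpr hb
  have hm : 0 ≤ m := norm_nonneg _
  have hq : |q| ≤ ‖δ‖ := abs_inner_div_norm_le b δ
  have hq2 : q ^ 2 ≤ ‖δ‖ ^ 2 := sq_le_sq' (abs_le.mp hq).1 (abs_le.mp hq).2
  have hcos : m ^ 2 = n ^ 2 + 2 * n * q + ‖δ‖ ^ 2 := by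
    have : ⟪b, δ⟫ = n * q := by simp only [q]; field_simp
    rw [norm_add_sq_real, this]; ring
  set s := ‖δ‖ ^ 2 / (2 * n)
  have hs : 2 * n * s = ‖δ‖ ^ 2 := by simp only [s]; field_simp
  have hlow : n + q ≤ m := by nlinarith
  have hup : m ≤ n + q + s := by
    have : 0 ≤ n + q + s := by nlinarith [abs_le.mp hq, sq_nonneg (n - ‖δ‖)]
    nlinarith [sq_nonneg (q + s)]
  rw [abs_le]; constructor <;> linarith [show 0 ≤ s by positivity]

lemma norm_inv_norm_smul_add_sub_sub_linear_le (b δ : F) (hb : b ≠ 0) :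
    ‖‖b + δ‖⁻¹ • (b + δ) - ‖b‖⁻¹ • b - ‖b‖⁻¹ • (δ - (⟪b, δ⟫ / ‖b‖ ^ 2) • b)‖
      ≤ 3 * ‖δ‖ ^ 2 / ‖b‖ ^ 2 := by
  have hn : 0 < ‖b‖ := norm_pos_iff.mpr hb
  have he := abs_norm_add_sub_norm_sub_inner_div_le b δ hb
  have hq := abs_inner_div_norm_le b δ
  have hu := norm_inv_norm_smul_sub_inv_norm_smul_le (b + δ) b hb
  rw [add_sub_cancel_left] at hu
  -- With `u v = ‖v‖⁻¹ • v`, `q = ⟪b, δ⟫ / ‖b‖` and `e = ‖b + δ‖ - ‖b‖ - q`, the remainder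
  -- is `-(e • u (b + δ) + q • (u (b + δ) - u b)) / ‖b‖`; both terms are quadratic in `δ`.
  have hid : ‖b + δ‖⁻¹ • (b + δ) - ‖b‖⁻¹ • b - ‖b‖⁻¹ • (δ - (⟪b, δ⟫ / ‖b‖ ^ 2) • b)
      = -(‖b‖⁻¹ * (‖b + δ‖ - ‖b‖ - ⟪b, δ⟫ / ‖b‖)) • (‖b + δ‖⁻¹ • (b + δ))
        - (‖b‖⁻¹ * (⟪b, δ⟫ / ‖b‖)) • (‖b + δ‖⁻¹ • (b + δ) - ‖b‖⁻¹ • b) := by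
    have hv := norm_smul_inv_norm_smul_self (b + δ)
    have hk : ‖b‖⁻¹ * ‖b‖ = 1 := inv_mul_cancel₀ hn.ne'
    linear_combination (norm := module) ‖b‖⁻¹ • hv - hk • (‖b + δ‖⁻¹ • (b + δ))
  rw [hid]
  set U := ‖b + δ‖⁻¹ • (b + δ)
  have hU : ‖U‖ ≤ 1 := norm_inv_norm_smul_le_one (b + δ)
  calc ‖-(‖b‖⁻¹ * (‖b + δ‖ - ‖b‖ - ⟪b, δ⟫ / ‖b‖)) • U - (‖b‖⁻¹ * (⟪b, δ⟫ / ‖b‖)) • (U - ‖b‖⁻¹ • b)‖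
      ≤ ‖b‖⁻¹ * |‖b + δ‖ - ‖b‖ - ⟪b, δ⟫ / ‖b‖| * ‖U‖
        + ‖b‖⁻¹ * |⟪b, δ⟫ / ‖b‖| * ‖U - ‖b‖⁻¹ • b‖ := by
        refine (norm_sub_le _ _).trans_eq ?_
        simp only [norm_smul, norm_neg, norm_mul, norm_inv, Real.norm_eq_abs, abs_norm]
    _ ≤ ‖b‖⁻¹ * (‖δ‖ ^ 2 / (2 * ‖b‖)) * 1 + ‖b‖⁻¹ * ‖δ‖ * (2 * ‖δ‖ / ‖b‖) := by gcongr
    _ ≤ 3 * ‖δ‖ ^ 2 / ‖b‖ ^ 2 := by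
        field_simp; nlinarith [sq_nonneg ‖δ‖]

lemma norm_inv_norm_smul_sub_inner_div_smul_le (b δ : F) :
    ‖‖b‖⁻¹ • (δ - (⟪b, δ⟫ / ‖b‖ ^ 2) • b)‖ ≤ 2 * ‖δ‖ * ‖b‖⁻¹ := by
  rcases eq_or_ne b 0 with rfl | hb
  · simp
  have hproj : ‖(⟪b, δ⟫ / ‖b‖ ^ 2) • b‖ ≤ ‖δ‖ := by
    have hn : ‖b‖ ≠ 0 := norm_ne_zero_iff.mpr hb
    rw [norm_smul, Real.norm_eq_abs, ← abs_norm b, ← abs_mul, abs_norm,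
      show ⟪b, δ⟫ / ‖b‖ ^ 2 * ‖b‖ = ⟪b, δ⟫ / ‖b‖ by field_simp]
    exact abs_inner_div_norm_le b δ
  rw [norm_smul, norm_inv, norm_norm, mul_comm]
  gcongr
  linarith [norm_sub_le δ ((⟪b, δ⟫ / ‖b‖ ^ 2) • b)]

end UnitVector

section ParameterSpace

variable {d : ℕ}

@[simp] lemma pz_pmk (z : Vec d) (a : ℝ) : pz (pmk z a) = z := rfl

@[simp] lemma pa_pmk (z : Vec d) (a : ℝ) : pa (pmk z a) = a := rfl

@[simp] lemma pz_sub (y y' : Par d) : pz (y - y') = pz y - pz y' := rfl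

@[simp] lemma pa_sub (y y' : Par d) : pa (y - y') = pa y - pa y' := rfl

lemma pmk_sub (z z' : Vec d) (a a' : ℝ) : pmk z a - pmk z' a' = pmk (z - z') (a - a') := rfl

lemma norm_sq_eq_norm_pz_sq_add_pa_sq (y : Par d) : ‖y‖ ^ 2 = ‖pz y‖ ^ 2 + pa y ^ 2 := by
  rw [WithLp.prod_norm_sq_eq_of_L2, Real.norm_eq_abs, sq_abs]; rfl

lemma norm_pmk_le (z : Vec d) (a : ℝ) : ‖pmk z a‖ ≤ ‖z‖ + |a| := by
  have h := norm_sq_eq_norm_pz_sq_add_pa_sq (pmk z a)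
  simp only [pz_pmk, pa_pmk] at h
  nlinarith [norm_nonneg (pmk z a), norm_nonneg z, abs_nonneg a, sq_abs a]

end ParameterSpace

section Linearization

variable {d : ℕ}

/-- The derivative of `Hgrad x` at `θ` in the direction `y'`; its mean is `GammaAt`. -/
def linHgrad (x : Vec d) (θ y' : Par d) : Par d :=
  pmk (pz y' - pa θ • (‖x - pz θ‖⁻¹ •
          (pz y' - (⟪x - pz θ, pz y'⟫ / ‖x - pz θ‖ ^ 2) • (x - pz θ)))
        + pa y' • (‖x - pz θ‖⁻¹ • (x - pz θ)))
      (⟪‖x - pz θ‖⁻¹ • (x - pz θ), pz y'⟫ + pa y')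

lemma Hgrad_sub_Hgrad_sub_linHgrad {x : Vec d} {θ y : Par d} {b δ : Vec d}
    (hb : pz θ - x = b) (hδ : pz y - pz θ = δ) :
    Hgrad x y - Hgrad x θ - linHgrad x θ (y - θ)
      = pmk (-pa θ • (‖b + δ‖⁻¹ • (b + δ) - ‖b‖⁻¹ • b - ‖b‖⁻¹ • (δ - (⟪b, δ⟫ / ‖b‖ ^ 2) • b))
              - (pa y - pa θ) • (‖b + δ‖⁻¹ • (b + δ) - ‖b‖⁻¹ • b))
            (-(‖b + δ‖ - ‖b‖ - ⟪b, δ⟫ / ‖b‖)) := by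
  have hxb : x - pz θ = -b := by rw [← hb, neg_sub]
  have hyb : pz y - x = b + δ := by rw [← hb, ← hδ]; abel
  simp only [Hgrad, linHgrad, pmk_sub, pz_sub, pa_sub, hyb, hxb, hb, hδ, norm_neg, inner_neg_left,
    real_inner_smul_left]
  congr 1
  · module
  · ring

lemma norm_Hgrad_sub_Hgrad_sub_linHgrad_le (x : Vec d) (θ y : Par d) (hx : x ≠ pz θ) :
    ‖Hgrad x y - Hgrad x θ - linHgrad x θ (y - θ)‖
      ≤ (3 * |pa θ| * (‖x - pz θ‖ ^ 2)⁻¹ + 2 * ‖x - pz θ‖⁻¹) * ‖y - θ‖ ^ 2 := by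
  set b := pz θ - x
  set δ := pz y - pz θ
  set α := pa y - pa θ
  have hb : b ≠ 0 := sub_ne_zero.mpr hx.symm
  have hnb : 0 < ‖b‖ := norm_pos_iff.mpr hb
  have hN : ‖δ‖ ^ 2 + α ^ 2 = ‖y - θ‖ ^ 2 := by
    rw [norm_sq_eq_norm_pz_sq_add_pa_sq]; rfl
  have hR := norm_inv_norm_smul_add_sub_sub_linear_le b δ hb
  have hV := norm_inv_norm_smul_sub_inv_norm_smul_le (b + δ) b hb
  have he := abs_norm_add_sub_norm_sub_inner_div_le b δ hb
  rw [add_sub_cancel_left] at hV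
  have hn : ‖x - pz θ‖ = ‖b‖ := norm_sub_rev _ _
  rw [Hgrad_sub_Hgrad_sub_linHgrad rfl rfl, hn]
  refine (norm_pmk_le _ _).trans ?_
  calc _ ≤ |pa θ| * (3 * ‖δ‖ ^ 2 / ‖b‖ ^ 2) + |α| * (2 * ‖δ‖ / ‖b‖)
          + ‖δ‖ ^ 2 / (2 * ‖b‖) := by
        rw [abs_neg]
        gcongr
        refine (norm_sub_le _ _).trans ?_
        rw [norm_smul, norm_smul, norm_neg, Real.norm_eq_abs, Real.norm_eq_abs]
        gcongr
    _ ≤ _ := by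
        rw [← hN]
        field_simp
        nlinarith [sq_nonneg (|α| - ‖δ‖), sq_abs α, abs_nonneg (pa θ), sq_nonneg ‖δ‖, sq_nonneg α]

end Linearization

section Integration

variable {Ω : Type*} [MeasurableSpace Ω] {P : Measure Ω} {d : ℕ}

lemma integrable_pmk {f : Ω → Vec d} {g : Ω → ℝ} (hf : Integrable f P) (hg : Integrable g P) :
    Integrable (fun ω => pmk (f ω) (g ω)) P :=
  (WithLp.prodContinuousLinearEquiv 2 ℝ (Vec d) ℝ).symm.toContinuousLinearMap.integrable_comp
    (hf.prodMk hg)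

lemma integral_pmk {f : Ω → Vec d} {g : Ω → ℝ} (hf : Integrable f P) (hg : Integrable g P) :
    ∫ ω, pmk (f ω) (g ω) ∂P = pmk (∫ ω, f ω ∂P) (∫ ω, g ω ∂P) := by
  have h := (WithLp.prodContinuousLinearEquiv 2 ℝ (Vec d) ℝ).symm.toContinuousLinearMap
    |>.integral_comp_comm (hf.prodMk hg)
  rw [integral_pair hf hg] at h
  exact h

lemma integrable_inv_norm_smul_self [IsFiniteMeasure P] {F : Type*} [NormedAddCommGroup F]
    [InnerProductSpace ℝ F] {f : Ω → F} (hf : AEStronglyMeasurable f P) :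
    Integrable (fun ω => ‖f ω‖⁻¹ • f ω) P :=
  .of_bound (by fun_prop) 1 (ae_of_all _ fun ω => norm_inv_norm_smul_le_one (f ω))

variable {X : Ω → Vec d}

lemma integrable_Hgrad [IsFiniteMeasure P] (hX : Integrable X P) (y : Par d) :
    Integrable (fun ω => Hgrad (X ω) y) P := by
  have hyX : Integrable (fun ω => pz y - X ω) P := (integrable_const _).sub hX
  exact integrable_pmk (hyX.sub ((integrable_inv_norm_smul_self hyX.1).smul (pa y)))
    ((integrable_const _).sub hyX.norm)

lemma integrable_inv_norm_smul_sub_inner_div_smul [IsFiniteMeasure P] (hX : AEMeasurable X P)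
    {z : Vec d} (hinv : Integrable (fun ω => ‖X ω - z‖⁻¹) P) (δ : Vec d) :
    Integrable (fun ω => ‖X ω - z‖⁻¹ • (δ - (⟪X ω - z, δ⟫ / ‖X ω - z‖ ^ 2) • (X ω - z))) P :=
  (hinv.const_mul (2 * ‖δ‖)).mono' (by fun_prop) (ae_of_all _ fun ω =>
    norm_inv_norm_smul_sub_inner_div_smul_le (X ω - z) δ)

lemma integral_linHgrad [IsProbabilityMeasure P] (hX : AEMeasurable X P) {θ : Par d}
    (hinv : Integrable (fun ω => ‖X ω - pz θ‖⁻¹) P) (y' : Par d) :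
    Integrable (fun ω => linHgrad (X ω) θ y') P ∧
      ∫ ω, linHgrad (X ω) θ y' ∂P = GammaAt P X θ y' := by
  set u := fun ω => ‖X ω - pz θ‖⁻¹ • (X ω - pz θ)
  set D := fun ω => ‖X ω - pz θ‖⁻¹ •
    (pz y' - (⟪X ω - pz θ, pz y'⟫ / ‖X ω - pz θ‖ ^ 2) • (X ω - pz θ))
  have hu : Integrable u P := integrable_inv_norm_smul_self (by fun_prop)
  have hD : Integrable D P := integrable_inv_norm_smul_sub_inner_div_smul hX hinv (pz y')
  have hDa : Integrable (fun ω => pa θ • D ω) P := hD.smul (pa θ)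
  have hua : Integrable (fun ω => pa y' • u ω) P := hu.smul (pa y')
  have hlin : Integrable (fun ω => pz y' - pa θ • D ω) P := (integrable_const (pz y')).sub hDa
  have hz : Integrable (fun ω => pz y' - pa θ • D ω + pa y' • u ω) P := hlin.add hua
  have hin : Integrable (fun ω => ⟪u ω, pz y'⟫) P := hu.inner_const (pz y')
  have ha : Integrable (fun ω => ⟪u ω, pz y'⟫ + pa y') P := hin.add (integrable_const (pa y'))
  refine ⟨integrable_pmk hz ha, ?_⟩
  change ∫ ω, pmk (pz y' - pa θ • D ω + pa y' • u ω) (⟪u ω, pz y'⟫ + pa y') ∂P = _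
  rw [integral_pmk hz ha, integral_add hlin hua,
    integral_sub (integrable_const _) hDa, integral_add hin (integrable_const _),
    integral_smul, integral_smul]
  simp only [real_inner_comm (pz y'), integral_inner hu, integral_const, probReal_univ, one_smul]
  rw [real_inner_comm]
  rfl

lemma integrable_inv_norm_of_integrable_inv_sq [IsFiniteMeasure P] (hX : AEMeasurable X P)
    {z : Vec d} (hinv : Integrable (fun ω => (‖X ω - z‖ ^ 2)⁻¹) P) :
    Integrable (fun ω => ‖X ω - z‖⁻¹) P :=
  ((memLp_two_iff_integrable_sq (by fun_prop)).2 (by simpa only [inv_pow] using hinv)).integrable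
    one_le_two

lemma integrable_of_integrable_norm_sub_sq [IsFiniteMeasure P] (hX : AEStronglyMeasurable X P)
    {z : Vec d} (h : Integrable (fun ω => ‖X ω - z‖ ^ 2) P) : Integrable X P :=
  (((memLp_two_iff_integrable_sq_norm (by fun_prop)).2 h).integrable one_le_two).add
    (integrable_const z) |>.congr (ae_of_all _ fun ω => sub_add_cancel (X ω) z)

theorem norm_Phi_sub_Phi_sub_GammaAt_le [IsProbabilityMeasure P] (hX : Integrable X P)
    {θ : Par d} (hne : ∀ᵐ ω ∂P, X ω ≠ pz θ)
    (hinv : Integrable (fun ω => (‖X ω - pz θ‖ ^ 2)⁻¹) P) (y : Par d) :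
    ‖Phi P X y - Phi P X θ - GammaAt P X θ (y - θ)‖
      ≤ (3 * |pa θ| * ∫ ω, (‖X ω - pz θ‖ ^ 2)⁻¹ ∂P + 2 * ∫ ω, ‖X ω - pz θ‖⁻¹ ∂P)
        * ‖y - θ‖ ^ 2 := by
  have hinv1 := integrable_inv_norm_of_integrable_inv_sq hX.aemeasurable hinv
  obtain ⟨hlinI, hlin⟩ := integral_linHgrad hX.aemeasurable hinv1 (y - θ)
  have hHy := integrable_Hgrad hX y
  have hHθ := integrable_Hgrad hX θ
  have hbound : Integrable (fun ω => (3 * |pa θ| * (‖X ω - pz θ‖ ^ 2)⁻¹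
      + 2 * ‖X ω - pz θ‖⁻¹) * ‖y - θ‖ ^ 2) P :=
    ((hinv.const_mul _).add (hinv1.const_mul _)).mul_const _
  have hdiff : Integrable (fun ω => Hgrad (X ω) y - Hgrad (X ω) θ) P := hHy.sub hHθ
  rw [← hlin, Phi, Phi, ← integral_sub hHy hHθ, ← integral_sub hdiff hlinI]
  refine (norm_integral_le_of_norm_le hbound (hne.mono fun ω hω =>
    norm_Hgrad_sub_Hgrad_sub_linHgrad_le (X ω) θ y hω)).trans_eq ?_
  rw [integral_mul_const, integral_add (hinv.const_mul _) (hinv1.const_mul _),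
    integral_const_mul, integral_const_mul]

end Integration

section Model

variable {d : ℕ}

lemma Hgrad_add_smul_pmk (μ u : Vec d) (hu : ‖u‖ = 1) {ρ : ℝ} (hρ : 0 < ρ) (a : ℝ) :
    Hgrad (μ + ρ • u) (pmk μ a) = pmk (a • u - ρ • u) (a - ρ) := by
  have hsub : μ - (μ + ρ • u) = -(ρ • u) := by abel
  have hnorm : ‖ρ • u‖ = ρ := by rw [norm_smul, hu, mul_one, Real.norm_of_nonneg hρ.le]
  simp only [Hgrad, pz_pmk, pa_pmk, hsub, norm_neg, hnorm, smul_neg, smul_smul,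
    inv_mul_cancel₀ hρ.ne', one_smul]
  congr 1
  module

variable {Ω : Type*} [MeasurableSpace Ω] {P : Measure Ω} [IsProbabilityMeasure P]

lemma Phi_pmk_integral_eq_zero (μ : Vec d) {r : ℝ} (hr : 0 < r) {W : Ω → ℝ} {U : Ω → Vec d}
    (hWm : Measurable W) (hUm : Measurable U) (hWpos : ∀ ω, 0 < W ω) (hUnorm : ∀ ω, ‖U ω‖ = 1)
    (hindep : IndepFun W U P) (hW : Integrable W P) :
    Phi P (fun ω => μ + (r * W ω) • U ω) (pmk μ (r * ∫ ω, W ω ∂P)) = 0 := by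
  have hU : Integrable U P :=
    .of_bound hUm.aestronglyMeasurable 1 (ae_of_all _ fun ω => (hUnorm ω).le)
  have hWU : Integrable (fun ω => W ω • U ω) P :=
    hW.norm.mono' (hWm.smul hUm).aestronglyMeasurable
      (ae_of_all _ fun ω => by rw [norm_smul, hUnorm, mul_one])
  have hH : ∀ ω, Hgrad (μ + (r * W ω) • U ω) (pmk μ (r * ∫ ω, W ω ∂P))
      = pmk ((r * ∫ ω, W ω ∂P) • U ω - r • (W ω • U ω)) (r * ∫ ω, W ω ∂P - r * W ω) := by
    intro ω
    rw [Hgrad_add_smul_pmk μ (U ω) (hUnorm ω) (mul_pos hr (hWpos ω)), mul_smul r (W ω)]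
  have hcU : Integrable (fun ω => (r * ∫ ω, W ω ∂P) • U ω) P :=
    hU.smul (r * ∫ ω, W ω ∂P)
  have hrWU : Integrable (fun ω => r • (W ω • U ω)) P := hWU.smul r
  have hrW : Integrable (fun ω => r * W ω) P := hW.const_mul r
  simp only [Phi, hH]
  have hz : Integrable (fun ω => (r * ∫ ω, W ω ∂P) • U ω - r • (W ω • U ω)) P := hcU.sub hrWU
  have ha : Integrable (fun ω => r * ∫ ω, W ω ∂P - r * W ω) P := (integrable_const _).sub hrW
  rw [integral_pmk hz ha, integral_sub hcU hrWU,
    integral_sub (integrable_const _) hrW, integral_smul, integral_smul, integral_const,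
    hindep.integral_fun_smul_eq_smul_integral hWm.aestronglyMeasurable hUm.aestronglyMeasurable]
  simp only [probReal_univ, one_smul, mul_smul, integral_const_mul, sub_self]
  rfl

end Model

theorem statement11_general
    {Ω : Type*} [MeasurableSpace Ω] (P : Measure Ω) [IsProbabilityMeasure P]
    {d : ℕ}
    (μ : Vec d) (r : ℝ) (hr : 0 < r)
    (W : Ω → ℝ) (U : Ω → Vec d)
    (hWm : Measurable W) (hUm : Measurable U)
    (hWpos : ∀ ω, 0 < W ω) (hUnorm : ∀ ω, ‖U ω‖ = 1)
    (hindep : IndepFun W U P)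
    (X : Ω → Vec d) (hX : ∀ ω, X ω = μ + (r * W ω) • U ω)
    (rstar : ℝ) (hrstar : rstar = r * ∫ ω, W ω ∂P)
    (hA1 : Integrable (fun ω => (‖X ω - μ‖ ^ 2)⁻¹) P)
    (hA2 : Integrable (fun ω => ‖X ω - μ‖ ^ 2) P)
    :
    ∀ K : Set (Par d), IsCompact K → Convex ℝ K → pmk μ rstar ∈ K →
      ∃ Cθ : ℝ, 0 < Cθ ∧ ∀ y ∈ K,
        ‖Phi P X y - GammaAt P X (pmk μ rstar) (y - pmk μ rstar)‖ ≤
          Cθ * ‖y - pmk μ rstar‖ ^ 2 := by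
  intro K _ _ _
  have hXm : Measurable X := funext hX ▸ by fun_prop
  have hnorm : ∀ ω, ‖X ω - μ‖ = r * W ω := fun ω => by
    rw [hX, add_sub_cancel_left, norm_smul, hUnorm, mul_one,
      Real.norm_of_nonneg (mul_pos hr (hWpos ω)).le]
  have hne : ∀ ω, X ω ≠ μ := fun ω h => by
    have := hnorm ω
    rw [h, sub_self, norm_zero] at this
    exact (mul_pos hr (hWpos ω)).ne this
  have hXint : Integrable X P := integrable_of_integrable_norm_sub_sq hXm.aestronglyMeasurable hA2
  have hW : Integrable W P := by
    refine ((hXint.sub (integrable_const μ)).norm.const_mul r⁻¹).congr (ae_of_all _ fun ω => ?_)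
    simp only [Pi.sub_apply, hnorm, inv_mul_cancel_left₀ hr.ne']
  have hΦθ : Phi P X (pmk μ rstar) = 0 := by
    rw [funext hX, hrstar]
    exact Phi_pmk_integral_eq_zero μ hr hWm hUm hWpos hUnorm hindep hW
  refine ⟨3 * |rstar| * ∫ ω, (‖X ω - μ‖ ^ 2)⁻¹ ∂P + 2 * ∫ ω, ‖X ω - μ‖⁻¹ ∂P + 1, by positivity,
    fun y _ => ?_⟩
  have h := norm_Phi_sub_Phi_sub_GammaAt_le hXint (θ := pmk μ rstar) (ae_of_all _ hne) hA1 y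
  rw [hΦθ, sub_zero, pz_pmk, pa_pmk] at h
  exact h.trans (mul_le_mul_of_nonneg_right (le_add_of_nonneg_right zero_le_one) (sq_nonneg _))

theorem statement11
    {Ω : Type*} [MeasurableSpace Ω] (P : Measure Ω) [IsProbabilityMeasure P]
    {d : ℕ} (hd : 2 ≤ d)
    (μ : Vec d) (r : ℝ) (hr : 0 < r)
    (W : Ω → ℝ) (U : Ω → Vec d)
    (hWm : Measurable W) (hUm : Measurable U)
    (hWpos : ∀ ω, 0 < W ω) (hUnorm : ∀ ω, ‖U ω‖ = 1)
    (hindep : IndepFun W U P)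
    (X : Ω → Vec d) (hX : ∀ ω, X ω = μ + (r * W ω) • U ω)
    (rstar : ℝ) (hrstar : rstar = r * ∫ ω, W ω ∂P)
    (hA1 : Integrable (fun ω => (‖X ω - μ‖ ^ 2)⁻¹) P)
    (hA2 : Integrable (fun ω => ‖X ω - μ‖ ^ 2) P)
    (Rμ Rr A : ℝ) (hRμ : 0 < Rμ) (hRr : 0 < Rr)
    (hAlb : ‖∫ ω, U ω ∂P‖ ^ 2 < A) (hAub : A < 1)
    (hA3 : ∃ L : ℝ, L < (1 - ‖∫ ω, U ω ∂P‖ ^ 2 / A) / (rstar + 3 / 2 * Rr) ∧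
      ∀ z ∈ Metric.closedBall μ Rμ, ∀ v : Vec d, ‖v‖ = 1 → GammaQF P X z v ≤ L)
    :
    ∀ K : Set (Par d), IsCompact K → Convex ℝ K → pmk μ rstar ∈ K →
      ∃ Cθ : ℝ, 0 < Cθ ∧ ∀ y ∈ K,
        ‖Phi P X y - GammaAt P X (pmk μ rstar) (y - pmk μ rstar)‖ ≤
          Cθ * ‖y - pmk μ rstar‖ ^ 2 :=
  statement11_general P μ r hr W U hWm hUm hWpos hUnorm hindep X hX rstar hrstar hA1 hA2

end
end

section
/- Let k ≥ 1 be an integer and suppose E[W^{2k}] < ∞. Then for every y = (z,a) ∈ ℝ^d × ℝ, E[‖H(X,y)‖^{2k}] ≤ 4^{3k−1}·(2^k·‖y − θ‖^{2k} + 2^k·(r*)^{2k} + r^{2k}·E[W^{2k}] + r^{2k}·(E[W²])^k). -/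
/-!
Pointwise, the first component of `H(x, y)` is `(‖z - x‖ - a) (z - x)/‖z - x‖`, so
`‖H(x, y)‖² ≤ 2 (a - ‖z - x‖)²`. The triangle inequality through `θ = (μ, r*)` bounds
`|a - ‖z - x‖|` by `|a - r*| + ‖z - μ‖ + |r*| + ‖x - μ‖`, and convexity of `t ↦ t^{2k}` turns this
into a bound by `‖y - θ‖^{2k}`, `(r*)^{2k}` and `‖X - μ‖^{2k} = r^{2k} W^{2k}`, which is then
integrated.
-/

open MeasureTheory ProbabilityTheory Filter
open scoped ENNReal NNReal RealInnerProductSpace Topology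

noncomputable section

lemma add_add_add_pow_le {p q s t : ℝ} (hp : 0 ≤ p) (hq : 0 ≤ q) (hs : 0 ≤ s) (ht : 0 ≤ t) :
    ∀ n : ℕ, (p + q + s + t) ^ n ≤ 4 ^ (n - 1) * (p ^ n + q ^ n + s ^ n + t ^ n)
  | 0 => by norm_num
  | n + 1 => by
    have h := pow_sum_le_card_mul_sum_pow (s := Finset.univ) (f := ![p, q, s, t])
      (by intro i _; fin_cases i <;> assumption) n
    simpa [Fin.sum_univ_four, add_assoc] using h

lemma norm_sub_smul_inv_norm_smul_le {E : Type*} [NormedAddCommGroup E] [NormedSpace ℝ E]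
    (v : E) (a : ℝ) : ‖v - a • (‖v‖⁻¹ • v)‖ ≤ |a - ‖v‖| := by
  rcases eq_or_ne ‖v‖ 0 with hv | hv
  · simp [norm_eq_zero.mp hv]
  · have : v - a • (‖v‖⁻¹ • v) = ((‖v‖ - a) / ‖v‖) • v := by
      rw [smul_smul, sub_div, div_self hv, sub_smul, one_smul, div_eq_mul_inv]
    rw [this, norm_smul, Real.norm_eq_abs, abs_div, abs_norm, div_mul_cancel₀ _ hv, abs_sub_comm]

lemma abs_sub_norm_sub_le {E : Type*} [SeminormedAddCommGroup E] (a c : ℝ) (z z₀ x : E) :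
    |a - ‖z - x‖| ≤ |a - c| + ‖z - z₀‖ + |c| + ‖x - z₀‖ := by
  have h₁ : |a - ‖z - x‖| ≤ |a| + ‖z - x‖ := (abs_sub a _).trans_eq (by rw [abs_norm])
  have h₂ : |a| - |c| ≤ |a - c| := abs_sub_abs_le_abs_sub a c
  have h₃ : ‖z - x‖ ≤ ‖z - z₀‖ + ‖x - z₀‖ := by
    simpa only [norm_sub_rev x] using norm_sub_le_norm_sub_add_norm_sub z z₀ x
  linarith

lemma norm_sub_pmk_sq {d : ℕ} (y : Par d) (z₀ : Vec d) (c : ℝ) :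
    ‖y - pmk z₀ c‖ ^ 2 = ‖pz y - z₀‖ ^ 2 + (pa y - c) ^ 2 := by
  rw [WithLp.prod_norm_sq_eq_of_L2, Real.norm_eq_abs, sq_abs]
  rfl

lemma norm_Hgrad_sq_le {d : ℕ} (x : Vec d) (y : Par d) :
    ‖Hgrad x y‖ ^ 2 ≤ 2 * (pa y - ‖pz y - x‖) ^ 2 := by
  have h := norm_sub_smul_inv_norm_smul_le (pz y - x) (pa y)
  have h' := pow_le_pow_left₀ (norm_nonneg _) h 2
  rw [sq_abs] at h'
  rw [WithLp.prod_norm_sq_eq_of_L2, Real.norm_eq_abs, sq_abs]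
  change ‖pz y - x - pa y • (‖pz y - x‖⁻¹ • (pz y - x))‖ ^ 2 + (pa y - ‖pz y - x‖) ^ 2 ≤ _
  linarith

lemma norm_Hgrad_pow_le {d : ℕ} (x : Vec d) (y : Par d) (z₀ : Vec d) (c : ℝ) {k : ℕ}
    (hk : 1 ≤ k) :
    ‖Hgrad x y‖ ^ (2 * k) ≤
      4 ^ (3 * k - 1) * (‖y - pmk z₀ c‖ ^ (2 * k) + c ^ (2 * k) + ‖x - z₀‖ ^ (2 * k)) := by
  set a := pa y
  set z := pz y
  have hH : ‖Hgrad x y‖ ^ (2 * k) ≤ 2 ^ k * |a - ‖z - x‖| ^ (2 * k) := by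
    rw [pow_mul, pow_mul, ← mul_pow, sq_abs]
    exact pow_le_pow_left₀ (sq_nonneg _) (norm_Hgrad_sq_le x y) k
  have hsplit : |a - ‖z - x‖| ^ (2 * k) ≤
      4 ^ (2 * k - 1) * (|a - c| ^ (2 * k) + ‖z - z₀‖ ^ (2 * k) + |c| ^ (2 * k)
        + ‖x - z₀‖ ^ (2 * k)) :=
    (pow_le_pow_left₀ (abs_nonneg _) (abs_sub_norm_sub_le a c z z₀ x) _).trans
      (add_add_add_pow_le (abs_nonneg _) (norm_nonneg _) (abs_nonneg _) (norm_nonneg _) _)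
  have hpar : |a - c| ^ (2 * k) + ‖z - z₀‖ ^ (2 * k) ≤ ‖y - pmk z₀ c‖ ^ (2 * k) := by
    rw [pow_mul, pow_mul, pow_mul, sq_abs, norm_sub_pmk_sq, add_comm]
    exact pow_add_pow_le (sq_nonneg _) (sq_nonneg _) (by omega)
  have hconst : (2 : ℝ) ^ k * 4 ^ (2 * k - 1) ≤ 4 ^ (3 * k - 1) := by
    rw [show 3 * k - 1 = k + (2 * k - 1) by omega, pow_add]
    gcongr
    norm_num
  rw [pow_abs_two_mul c] at hsplit
  have hc : 0 ≤ c ^ (2 * k) := (even_two_mul k).pow_nonneg c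
  calc ‖Hgrad x y‖ ^ (2 * k) ≤ 2 ^ k * |a - ‖z - x‖| ^ (2 * k) := hH
    _ ≤ 2 ^ k * (4 ^ (2 * k - 1) *
          (‖y - pmk z₀ c‖ ^ (2 * k) + c ^ (2 * k) + ‖x - z₀‖ ^ (2 * k))) := by
        gcongr 2 ^ k * ?_
        refine hsplit.trans ?_
        gcongr 4 ^ _ * ?_
        linarith
    _ ≤ _ := by rw [← mul_assoc]; gcongr

lemma lintegral_ofReal_le_ofReal_integral {Ω : Type*} [MeasurableSpace Ω] {P : Measure Ω}
    {f g : Ω → ℝ} (hg : Integrable g P) (hf : ∀ ω, 0 ≤ f ω) (hfg : ∀ ω, f ω ≤ g ω) :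
    ∫⁻ ω, ENNReal.ofReal (f ω) ∂P ≤ ENNReal.ofReal (∫ ω, g ω ∂P) := by
  rw [ofReal_integral_eq_lintegral_ofReal hg (Eventually.of_forall fun ω => (hf ω).trans (hfg ω))]
  exact lintegral_mono fun ω => ENNReal.ofReal_le_ofReal (hfg ω)

theorem statement14_general
    {Ω : Type*} [MeasurableSpace Ω] (P : Measure Ω) [IsProbabilityMeasure P]
    {d : ℕ}
    (μ : Vec d) (r : ℝ)
    (W : Ω → ℝ) (U : Ω → Vec d)
    (hUnorm : ∀ ω, ‖U ω‖ = 1)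
    (X : Ω → Vec d) (hX : ∀ ω, X ω = μ + (r * W ω) • U ω)
    (rstar : ℝ)
    (k : ℕ) (hk : 1 ≤ k)
    (hWk : Integrable (fun ω => W ω ^ (2 * k)) P)
    :
    ∀ y : Par d,
      ∫⁻ ω, ENNReal.ofReal (‖Hgrad (X ω) y‖ ^ (2 * k)) ∂P ≤
        ENNReal.ofReal ((4 : ℝ) ^ (3 * k - 1) *
          (2 ^ k * ‖y - pmk μ rstar‖ ^ (2 * k) + 2 ^ k * rstar ^ (2 * k) +
            r ^ (2 * k) * ∫ ω, W ω ^ (2 * k) ∂P +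
            r ^ (2 * k) * (∫ ω, W ω ^ 2 ∂P) ^ k)) := by
  intro y
  set N := ‖y - pmk μ rstar‖ ^ (2 * k)
  set R := rstar ^ (2 * k)
  have hX_sub : ∀ ω, ‖X ω - μ‖ ^ (2 * k) = r ^ (2 * k) * W ω ^ (2 * k) := fun ω => by
    rw [hX ω, add_sub_cancel_left, norm_smul, hUnorm, mul_one, Real.norm_eq_abs,
      pow_abs_two_mul, mul_pow]
  have hpt : ∀ ω, ‖Hgrad (X ω) y‖ ^ (2 * k) ≤
      4 ^ (3 * k - 1) * (N + R + r ^ (2 * k) * W ω ^ (2 * k)) := fun ω =>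
    hX_sub ω ▸ norm_Hgrad_pow_le (X ω) y μ rstar hk
  have hint : Integrable (fun ω => 4 ^ (3 * k - 1) * (N + R + r ^ (2 * k) * W ω ^ (2 * k))) P :=
    ((integrable_const _).add (hWk.const_mul _)).const_mul _
  have hN : 0 ≤ N := by positivity
  have hR : 0 ≤ R := (even_two_mul k).pow_nonneg rstar
  have hr : 0 ≤ r ^ (2 * k) := (even_two_mul k).pow_nonneg r
  have h2k : (1 : ℝ) ≤ 2 ^ k := one_le_pow₀ one_le_two
  have hJ : 0 ≤ (∫ ω, W ω ^ 2 ∂P) ^ k := pow_nonneg (integral_nonneg fun ω => sq_nonneg _) k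
  calc ∫⁻ ω, ENNReal.ofReal (‖Hgrad (X ω) y‖ ^ (2 * k)) ∂P
      ≤ ENNReal.ofReal (∫ ω, 4 ^ (3 * k - 1) * (N + R + r ^ (2 * k) * W ω ^ (2 * k)) ∂P) :=
        lintegral_ofReal_le_ofReal_integral hint (fun ω => by positivity) hpt
    _ = ENNReal.ofReal (4 ^ (3 * k - 1) * (N + R + r ^ (2 * k) * ∫ ω, W ω ^ (2 * k) ∂P)) := by
        rw [integral_const_mul, integral_add (integrable_const _) (hWk.const_mul _),
          integral_const, integral_const_mul, probReal_univ, one_smul]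
    _ ≤ _ := by
        gcongr ENNReal.ofReal (4 ^ _ * ?_)
        linarith [le_mul_of_one_le_left hN h2k, le_mul_of_one_le_left hR h2k, mul_nonneg hr hJ]

theorem statement14
    {Ω : Type*} [MeasurableSpace Ω] (P : Measure Ω) [IsProbabilityMeasure P]
    {d : ℕ} (hd : 2 ≤ d)
    (μ : Vec d) (r : ℝ) (hr : 0 < r)
    (W : Ω → ℝ) (U : Ω → Vec d)
    (hWm : Measurable W) (hUm : Measurable U)
    (hWpos : ∀ ω, 0 < W ω) (hUnorm : ∀ ω, ‖U ω‖ = 1)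
    (hindep : IndepFun W U P)
    (X : Ω → Vec d) (hX : ∀ ω, X ω = μ + (r * W ω) • U ω)
    (rstar : ℝ) (hrstar : rstar = r * ∫ ω, W ω ∂P)
    (k : ℕ) (hk : 1 ≤ k)
    (hWk : Integrable (fun ω => W ω ^ (2 * k)) P)
    :
    ∀ y : Par d,
      ∫⁻ ω, ENNReal.ofReal (‖Hgrad (X ω) y‖ ^ (2 * k)) ∂P ≤
        ENNReal.ofReal ((4 : ℝ) ^ (3 * k - 1) *
          (2 ^ k * ‖y - pmk μ rstar‖ ^ (2 * k) + 2 ^ k * rstar ^ (2 * k) +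
            r ^ (2 * k) * ∫ ω, W ω ^ (2 * k) ∂P +
            r ^ (2 * k) * (∫ ω, W ω ^ 2 ∂P) ^ k)) :=
  statement14_general P μ r W U hUnorm X hX rstar k hk hWk

end
end

section
/- Suppose d ≥ 3. Then for every ε > 0 there exists a positive constant k such that for all z ∈ ℝ^d with ‖z − μ‖ ≥ ε and all t ≥ 2/ε, P[‖X − z‖ ≤ 1/t] ≤ k / t^{d−1}. -/
open MeasureTheory ProbabilityTheory Filter
open scoped ENNReal NNReal RealInnerProductSpace Topology

noncomputable section

/-! If `‖X - z‖ ≤ 1/t` and `‖z - μ‖ ≥ ε`, then `U`, the direction of `X - μ`, lies within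
`δ = 2/(tε)` of the direction of `z - μ`: the event forces `U` into a spherical cap of radius `δ`.
The orthogonal projection of the cap onto the hyperplane perpendicular to its centre is undone by
the Lipschitz lift `w ↦ w + √(1 - ‖w‖²) c`, and the projection lies in a flat `(d-1)`-ball of
radius `δ`; hence the cap has `(d-1)`-dimensional Hausdorff measure `O(δ^(d-1))`. Since `U` is
uniform on `S`, the probability is at most that measure divided by `μH[d-1] S`. -/

open Metric Module

theorem norm_normalize_sub_normalize_le {V : Type*} [NormedAddCommGroup V] [NormedSpace ℝ V]
    (x : V) {y : V} (hy : y ≠ 0) :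
    ‖NormedSpace.normalize x - NormedSpace.normalize y‖ ≤ 2 * ‖x - y‖ / ‖y‖ := by
  have hy' : 0 < ‖y‖ := norm_pos_iff.2 hy
  have hsplit : NormedSpace.normalize x - NormedSpace.normalize y =
      (NormedSpace.normalize x - ‖y‖⁻¹ • x) + ‖y‖⁻¹ • (x - y) := by
    simp only [NormedSpace.normalize, smul_sub]; abel
  have hscale : ‖NormedSpace.normalize x - ‖y‖⁻¹ • x‖ ≤ ‖x - y‖ / ‖y‖ := by
    rcases eq_or_ne x 0 with rfl | hx
    · simp [div_nonneg]
    calc ‖NormedSpace.normalize x - ‖y‖⁻¹ • x‖ = |‖y‖ - ‖x‖| / ‖y‖ := by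
          rw [NormedSpace.normalize, ← sub_smul, norm_smul, Real.norm_eq_abs,
            inv_sub_inv (norm_ne_zero_iff.2 hx) hy'.ne', abs_div, abs_mul, abs_norm, abs_norm]
          field_simp [norm_ne_zero_iff.2 hx]
      _ ≤ ‖x - y‖ / ‖y‖ := by
          gcongr; rw [abs_sub_comm]; exact abs_norm_sub_norm_le x y
  calc ‖NormedSpace.normalize x - NormedSpace.normalize y‖
      ≤ ‖NormedSpace.normalize x - ‖y‖⁻¹ • x‖ + ‖‖y‖⁻¹ • (x - y)‖ := hsplit ▸ norm_add_le _ _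
    _ ≤ ‖x - y‖ / ‖y‖ + ‖x - y‖ / ‖y‖ := by
        gcongr
        rw [norm_smul, norm_inv, norm_norm, inv_mul_eq_div]
    _ = 2 * ‖x - y‖ / ‖y‖ := by ring

section SphericalCaps

variable {E : Type*} [NormedAddCommGroup E] [InnerProductSpace ℝ E]

theorem abs_sqrt_one_sub_sq_sub_sqrt_one_sub_sq_le {a b : ℝ} (ha : 0 ≤ a) (hb : 0 ≤ b)
    (ha' : a ^ 2 ≤ 3 / 4) (hb' : b ^ 2 ≤ 3 / 4) :
    |√(1 - a ^ 2) - √(1 - b ^ 2)| ≤ 2 * |a - b| := by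
  set sa := √(1 - a ^ 2)
  set sb := √(1 - b ^ 2)
  have hsa : 1 / 2 ≤ sa := Real.le_sqrt_of_sq_le (by linarith)
  have hsb : 1 / 2 ≤ sb := Real.le_sqrt_of_sq_le (by linarith)
  have ha1 : a ≤ 1 := (pow_le_one_iff_of_nonneg ha two_ne_zero).1 (by linarith)
  have hb1 : b ≤ 1 := (pow_le_one_iff_of_nonneg hb two_ne_zero).1 (by linarith)
  have hprod : |sa - sb| * (sa + sb) = |a - b| * (a + b) := by
    have hdiff : (sa - sb) * (sa + sb) = (b - a) * (a + b) := by
      linear_combination Real.sq_sqrt (by linarith : 0 ≤ 1 - a ^ 2)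
        - Real.sq_sqrt (by linarith : 0 ≤ 1 - b ^ 2)
    rw [← abs_of_nonneg (by linarith : 0 ≤ sa + sb), ← abs_of_nonneg (by linarith : 0 ≤ a + b),
      ← abs_mul, ← abs_mul, hdiff, abs_mul, abs_mul, abs_sub_comm]
  nlinarith [abs_nonneg (sa - sb), abs_nonneg (a - b)]

theorem lipschitzOnWith_add_sqrt_one_sub_norm_sq_smul {c : E} (hc : ‖c‖ = 1) :
    LipschitzOnWith 3 (fun w : E => w + √(1 - ‖w‖ ^ 2) • c) {w | ‖w‖ ^ 2 ≤ 3 / 4} := by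
  refine LipschitzOnWith.of_dist_le_mul fun x hx y hy => ?_
  have hsqrt := abs_sqrt_one_sub_sq_sub_sqrt_one_sub_sq_le (norm_nonneg x) (norm_nonneg y) hx hy
  calc dist (x + √(1 - ‖x‖ ^ 2) • c) (y + √(1 - ‖y‖ ^ 2) • c)
      = ‖(x - y) + (√(1 - ‖x‖ ^ 2) - √(1 - ‖y‖ ^ 2)) • c‖ := by
        rw [dist_eq_norm, sub_smul]; congr 1; abel
    _ ≤ ‖x - y‖ + |√(1 - ‖x‖ ^ 2) - √(1 - ‖y‖ ^ 2)| := by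
        grw [norm_add_le, norm_smul, hc, Real.norm_eq_abs, mul_one]
    _ ≤ ‖x - y‖ + 2 * ‖x - y‖ := by grw [hsqrt, abs_norm_sub_norm_le]
    _ = (3 : ℝ≥0) * dist x y := by rw [dist_eq_norm]; push_cast; ring

theorem hausdorffMeasure_orthogonal_inter_closedBall_s16 [MeasurableSpace E] [BorelSpace E] {m : ℕ}
    [Fact (finrank ℝ E = m + 1)] {c : E} (hc : c ≠ 0) {δ : ℝ} (hδ : 0 ≤ δ) :
    μH[m] (((ℝ ∙ c)ᗮ : Set E) ∩ closedBall 0 δ) =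
      ENNReal.ofReal (δ ^ m) * μH[m] (closedBall (0 : EuclideanSpace ℝ (Fin m)) 1) := by
  set b := OrthonormalBasis.fromOrthogonalSpanSingleton (𝕜 := ℝ) m hc
  have hι : Isometry fun x : EuclideanSpace ℝ (Fin m) => ((b.repr.symm x : (ℝ ∙ c)ᗮ) : E) :=
    isometry_subtype_coe.comp b.repr.symm.isometry
  have himage : ((ℝ ∙ c)ᗮ : Set E) ∩ closedBall 0 δ =
      (fun x : EuclideanSpace ℝ (Fin m) => ((b.repr.symm x : (ℝ ∙ c)ᗮ) : E)) ''
        closedBall 0 δ := by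
    ext w
    simp only [Set.mem_inter_iff, SetLike.mem_coe, mem_closedBall, dist_zero_right,
      Set.mem_image]
    constructor
    · rintro ⟨hw, hwδ⟩
      exact ⟨b.repr ⟨w, hw⟩, by rwa [b.repr.norm_map], by simp⟩
    · rintro ⟨x, hx, rfl⟩
      exact ⟨(b.repr.symm x).2, by rwa [Submodule.norm_coe, b.repr.symm.norm_map]⟩
  rw [himage, hι.hausdorffMeasure_image (Or.inl (Nat.cast_nonneg m)),
    Measure.addHaar_closedBall' _ _ hδ, finrank_euclideanSpace_fin]

theorem sphere_inter_closedBall_subset_image_s16 {c : E} (hc : ‖c‖ = 1) {δ : ℝ} (hδ : δ ≤ 1) :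
    sphere 0 1 ∩ closedBall c δ ⊆ (fun w : E => w + √(1 - ‖w‖ ^ 2) • c) ''
      (((ℝ ∙ c)ᗮ : Set E) ∩ closedBall 0 δ ∩ {w | ‖w‖ ^ 2 ≤ 3 / 4}) := by
  rintro u ⟨hu, huc⟩
  rw [mem_sphere_zero_iff_norm] at hu
  rw [mem_closedBall, dist_eq_norm] at huc
  set p := ⟪u, c⟫
  have hdist : ‖u - c‖ ^ 2 = 2 - 2 * p := by rw [norm_sub_sq_real, hu, hc]; ring
  have hproj : ‖u - p • c‖ ^ 2 = 1 - p ^ 2 := by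
    rw [norm_sub_sq_real, hu, real_inner_smul_right, norm_smul, hc, Real.norm_eq_abs, mul_one,
      sq_abs]
    ring
  have hδ0 : 0 ≤ δ := (norm_nonneg _).trans huc
  have hdistδ : ‖u - c‖ ^ 2 ≤ δ ^ 2 := pow_le_pow_left₀ (norm_nonneg _) huc 2
  have hp : 1 / 2 ≤ p := by nlinarith
  have hp1 : p ≤ 1 := by nlinarith [norm_nonneg (u - p • c)]
  refine ⟨u - p • c, ⟨⟨?_, ?_⟩, ?_⟩, ?_⟩
  · rw [SetLike.mem_coe, Submodule.mem_orthogonal_singleton_iff_inner_right, inner_sub_right,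
      real_inner_smul_right, real_inner_self_eq_norm_sq, hc, real_inner_comm]
    ring
  · rw [mem_closedBall, dist_zero_right]
    refine (pow_le_pow_iff_left₀ (norm_nonneg _) hδ0 two_ne_zero).1 ?_
    nlinarith
  · show ‖u - p • c‖ ^ 2 ≤ 3 / 4
    nlinarith
  · simp only [hproj, sub_sub_cancel, Real.sqrt_sq (by linarith : 0 ≤ p), sub_add_cancel]

theorem exists_hausdorffMeasure_sphere_inter_closedBall_le [MeasurableSpace E] [BorelSpace E]
    (m : ℕ) [Fact (finrank ℝ E = m + 1)] :
    ∃ C : ℝ, 0 < C ∧ ∀ c : E, ‖c‖ = 1 → ∀ δ : ℝ, 0 ≤ δ → δ ≤ 1 →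
      μH[m] (sphere 0 1 ∩ closedBall c δ) ≤ ENNReal.ofReal (C * δ ^ m) := by
  set B := μH[m] (closedBall (0 : EuclideanSpace ℝ (Fin m)) 1)
  have hB : 0 < B.toReal :=
    ENNReal.toReal_pos (measure_closedBall_pos _ _ one_pos).ne' measure_closedBall_lt_top.ne
  refine ⟨3 ^ m * B.toReal, by positivity, fun c hc δ hδ0 hδ1 => ?_⟩
  have hc0 : c ≠ 0 := norm_ne_zero_iff.1 (by rw [hc]; exact one_ne_zero)
  calc μH[m] (sphere 0 1 ∩ closedBall c δ)
      ≤ μH[m] ((fun w : E => w + √(1 - ‖w‖ ^ 2) • c) ''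
          (((ℝ ∙ c)ᗮ : Set E) ∩ closedBall 0 δ ∩ {w | ‖w‖ ^ 2 ≤ 3 / 4})) :=
        measure_mono (sphere_inter_closedBall_subset_image_s16 hc hδ1)
    _ ≤ ((3 : ℝ≥0) : ℝ≥0∞) ^ (m : ℝ) *
          μH[m] (((ℝ ∙ c)ᗮ : Set E) ∩ closedBall 0 δ ∩ {w | ‖w‖ ^ 2 ≤ 3 / 4}) :=
        ((lipschitzOnWith_add_sqrt_one_sub_norm_sq_smul hc).mono Set.inter_subset_right
          ).hausdorffMeasure_image_le (Nat.cast_nonneg m)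
    _ ≤ ((3 : ℝ≥0) : ℝ≥0∞) ^ (m : ℝ) * μH[m] (((ℝ ∙ c)ᗮ : Set E) ∩ closedBall 0 δ) :=
        mul_le_mul_right (measure_mono Set.inter_subset_left) _
    _ = ENNReal.ofReal (3 ^ m * B.toReal * δ ^ m) := by
        rw [hausdorffMeasure_orthogonal_inter_closedBall_s16 hc0 hδ0, ENNReal.rpow_natCast,
          ENNReal.ofReal_mul (by positivity), ENNReal.ofReal_mul (by positivity),
          ENNReal.ofReal_toReal measure_closedBall_lt_top.ne,
          ENNReal.ofReal_pow (by norm_num : (0 : ℝ) ≤ 3), ENNReal.ofReal_ofNat, ENNReal.coe_ofNat]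
        ring

end SphericalCaps

theorem statement16_general
    {Ω : Type*} [MeasurableSpace Ω] (P : Measure Ω)
    {d : ℕ} (hd : 3 ≤ d)
    (μ : Vec d) (r : ℝ) (hr : 0 < r)
    (W : Ω → ℝ) (U : Ω → Vec d)
    (hUm : Measurable U)
    (hWpos : ∀ ω, 0 < W ω) (hUnorm : ∀ ω, ‖U ω‖ = 1)
    (X : Ω → Vec d) (hX : ∀ ω, X ω = μ + (r * W ω) • U ω)
    (S : Set (Vec d)) (hSsub : S ⊆ Metric.sphere (0 : Vec d) 1)
    (hSpos : 0 < μH[(d : ℝ) - 1] S) (hSfin : μH[(d : ℝ) - 1] S < ⊤)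
    (hlaw : Measure.map U P = (μH[(d : ℝ) - 1] S)⁻¹ • (μH[(d : ℝ) - 1] : Measure (Vec d)).restrict S)
    :
    ∀ ε : ℝ, 0 < ε → ∃ k : ℝ, 0 < k ∧ ∀ z : Vec d, ε ≤ ‖z - μ‖ →
      ∀ t : ℝ, 2 / ε ≤ t →
        P {ω | ‖X ω - z‖ ≤ 1 / t} ≤ ENNReal.ofReal (k / t ^ (d - 1)) := by
  intro ε hε
  have hd1 : 1 ≤ d := by omega
  have : Fact (finrank ℝ (Vec d) = d - 1 + 1) := ⟨by rw [finrank_euclideanSpace_fin]; omega⟩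
  obtain ⟨C, hC, hcap⟩ := exists_hausdorffMeasure_sphere_inter_closedBall_le (E := Vec d) (d - 1)
  simp only [Nat.cast_sub hd1, Nat.cast_one] at hcap
  set ν := μH[(d : ℝ) - 1] S
  have hν : 0 < ν.toReal := ENNReal.toReal_pos hSpos.ne' hSfin.ne
  refine ⟨C * (2 / ε) ^ (d - 1) / ν.toReal, by positivity, fun z hz t ht => ?_⟩
  have ht0 : 0 < t := lt_of_lt_of_le (by positivity) ht
  set v := z - μ
  have hv : v ≠ 0 := norm_pos_iff.1 (hε.trans_le hz)
  set δ := 2 / (t * ε)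
  have hδ1 : δ ≤ 1 := by
    rw [div_le_one (by positivity)]
    rwa [div_le_iff₀ hε] at ht
  have hevent : {ω | ‖X ω - z‖ ≤ 1 / t} ⊆ U ⁻¹' closedBall (NormedSpace.normalize v) δ := by
    intro ω hω
    have hXz : (r * W ω) • U ω - v = X ω - z := by
      rw [hX ω]; simp only [v]; abel
    rw [Set.mem_preimage, mem_closedBall, dist_eq_norm]
    calc ‖U ω - NormedSpace.normalize v‖
        = ‖NormedSpace.normalize ((r * W ω) • U ω) - NormedSpace.normalize v‖ := by
          rw [NormedSpace.normalize_smul_of_pos (mul_pos hr (hWpos ω)),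
            NormedSpace.normalize_eq_self_of_norm_eq_one (hUnorm ω)]
      _ ≤ 2 * ‖X ω - z‖ / ‖v‖ := hXz ▸ norm_normalize_sub_normalize_le _ hv
      _ ≤ 2 * (1 / t) / ε := by gcongr; exact hω
      _ = δ := by rw [mul_one_div, div_div]
  calc P {ω | ‖X ω - z‖ ≤ 1 / t}
      ≤ P (U ⁻¹' closedBall (NormedSpace.normalize v) δ) := measure_mono hevent
    _ = ν⁻¹ * μH[(d : ℝ) - 1] (closedBall (NormedSpace.normalize v) δ ∩ S) := by
        rw [← Measure.map_apply hUm measurableSet_closedBall, hlaw, Measure.smul_apply,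
          smul_eq_mul, Measure.restrict_apply measurableSet_closedBall]
    _ ≤ ν⁻¹ * μH[(d : ℝ) - 1] (sphere 0 1 ∩ closedBall (NormedSpace.normalize v) δ) := by
        rw [Set.inter_comm]
        gcongr
    _ ≤ ν⁻¹ * ENNReal.ofReal (C * δ ^ (d - 1)) := by
        gcongr
        exact hcap _ (NormedSpace.norm_normalize hv) δ (by positivity) hδ1
    _ = ENNReal.ofReal (C * (2 / ε) ^ (d - 1) / ν.toReal / t ^ (d - 1)) := by
        rw [← ENNReal.ofReal_toReal (ENNReal.inv_ne_top.2 hSpos.ne'), ENNReal.toReal_inv,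
          ← ENNReal.ofReal_mul (by positivity)]
        congr 1
        simp only [δ, div_pow, mul_pow]
        field_simp

theorem statement16
    {Ω : Type*} [MeasurableSpace Ω] (P : Measure Ω) [IsProbabilityMeasure P]
    {d : ℕ} (hd : 3 ≤ d)
    (μ : Vec d) (r : ℝ) (hr : 0 < r)
    (W : Ω → ℝ) (U : Ω → Vec d)
    (hWm : Measurable W) (hUm : Measurable U)
    (hWpos : ∀ ω, 0 < W ω) (hUnorm : ∀ ω, ‖U ω‖ = 1)
    (hindep : IndepFun W U P)
    (X : Ω → Vec d) (hX : ∀ ω, X ω = μ + (r * W ω) • U ω)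
    (S : Set (Vec d)) (hSm : MeasurableSet S) (hSsub : S ⊆ Metric.sphere (0 : Vec d) 1)
    (hSpos : 0 < μH[(d : ℝ) - 1] S) (hSfin : μH[(d : ℝ) - 1] S < ⊤)
    (hlaw : Measure.map U P = (μH[(d : ℝ) - 1] S)⁻¹ • (μH[(d : ℝ) - 1] : Measure (Vec d)).restrict S)
    :
    ∀ ε : ℝ, 0 < ε → ∃ k : ℝ, 0 < k ∧ ∀ z : Vec d, ε ≤ ‖z - μ‖ →
      ∀ t : ℝ, 2 / ε ≤ t →
        P {ω | ‖X ω - z‖ ≤ 1 / t} ≤ ENNReal.ofReal (k / t ^ (d - 1)) :=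
  statement16_general P hd μ r hr W U hUm hWpos hUnorm X hX S hSsub hSpos hSfin hlaw

end
end
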